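/- Let 0 < τ ≤ 1/2, set L := log(1 + τ⁻²) and β := π / √(2L). Then √2 · √(2L/π) · τ ≤ Σ'_{n ∈ ℤ} (−1)ⁿ · exp(−β²·n²) ≤ 4 · √(2L/π) · τ. In particular, the alternating Gaussian sum Σ'_{n ∈ ℤ} (−1)ⁿ exp(−β²n²), which equals the minimal diagonal entry d₁(N/2) of the block-diagonalized Gaussian RBF collocation matrix, is of exact order τ (up to the slowly varying factor √(2L/π)), so the maximal entry of the pseudo-inverse Z* is of order τ⁻¹. -/

import Mathlib

open Real

private lemma le_of_sq_le' {a b : ℝ} (ha : 0 ≤ a) (hb : 0 ≤ b) (h : a ^ 2 ≤ b ^ 2) : a ≤ b :=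
  calc a = Real.sqrt (a ^ 2) := (Real.sqrt_sq ha).symm
    _ ≤ Real.sqrt (b ^ 2) := Real.sqrt_le_sqrt h
    _ = b := Real.sqrt_sq hb

private lemma gauss_le_pow' {c : ℝ} (hc : 0 < c) (n : ℕ) :
    Real.exp (-c * (n : ℝ) ^ 2) ≤ Real.exp (-c) ^ n := by
  rw [← Real.exp_nat_mul]
  apply Real.exp_le_exp.mpr
  have hn : (n : ℝ) ≤ (n : ℝ) ^ 2 := by
    rcases Nat.eq_zero_or_pos n with h | h
    · simp [h]
    · have : (1 : ℝ) ≤ (n : ℝ) := by exact_mod_cast h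
      nlinarith
  nlinarith

private lemma summable_gauss_nat' {c : ℝ} (hc : 0 < c) :
    Summable (fun n : ℕ => Real.exp (-c * (n : ℝ) ^ 2)) :=
  Summable.of_nonneg_of_le (fun _ => (Real.exp_pos _).le) (gauss_le_pow' hc)
    (summable_geometric_of_lt_one (Real.exp_pos _).le
      (Real.exp_lt_one_iff.mpr (by linarith)))

private lemma summable_gauss_int' {c : ℝ} (hc : 0 < c) :
    Summable (fun n : ℤ => Real.exp (-c * (n : ℝ) ^ 2)) := by
  apply Summable.of_nat_of_neg
  · simpa using summable_gauss_nat' hc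
  · simpa using summable_gauss_nat' hc

private lemma tsum_gauss_int' {c : ℝ} (hc : 0 < c) :
    ∑' n : ℤ, Real.exp (-c * (n : ℝ) ^ 2)
      = 2 * (∑' n : ℕ, Real.exp (-c * (n : ℝ) ^ 2)) - 1 := by
  rw [Summable.tsum_of_nat_of_neg (by simpa using summable_gauss_nat' hc)
    (by simpa using summable_gauss_nat' hc)]
  have h1 : (fun n : ℕ => Real.exp (-c * ((-(n : ℤ) : ℤ) : ℝ) ^ 2))
      = fun n : ℕ => Real.exp (-c * (n : ℝ) ^ 2) := by
    funext n; push_cast; ring_nf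
  have h2 : (fun n : ℕ => Real.exp (-c * (((n : ℤ) : ℝ)) ^ 2))
      = fun n : ℕ => Real.exp (-c * (n : ℝ) ^ 2) := by
    funext n; push_cast; ring_nf
  simp only [h1, h2]
  norm_num
  ring

private lemma poisson' {b : ℝ} (hb : 0 < b) :
    ∑' n : ℤ, Real.exp (-b * (n : ℝ) ^ 2)
      = (Real.sqrt (b / Real.pi))⁻¹
          * ∑' n : ℤ, Real.exp (-(Real.pi ^ 2 / b) * (n : ℝ) ^ 2) := by
  have hπ := Real.pi_pos
  have h := Real.tsum_exp_neg_mul_int_sq (a := b / Real.pi) (by positivity)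
  have h1 : -Real.pi * (b / Real.pi) = -b := by field_simp
  have h2 : -(Real.pi / (b / Real.pi)) = -(Real.pi ^ 2 / b) := by
    rw [div_div_eq_mul_div, ← pow_two]
  rw [h1] at h
  have h3 : ∀ n : ℤ, Real.exp (-Real.pi / (b / Real.pi) * (n : ℝ) ^ 2)
      = Real.exp (-(Real.pi ^ 2 / b) * (n : ℝ) ^ 2) := by
    intro n; rw [neg_div, h2]
  simp only [h3] at h
  rw [h, ← Real.sqrt_eq_rpow]
  rw [one_div]


private lemma q_le_tau {τ q : ℝ} (hτ : 0 < τ) (hq0 : 0 < q)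
    (hqsq : q ^ 2 * (1 + τ ^ 2) = τ ^ 2) : q ≤ τ := by
  nlinarith [sq_nonneg τ, mul_pos hq0 hτ]

private lemma low_numeric {τ q : ℝ} (hτ : 0 < τ) (hτ' : τ ≤ 1 / 2) (hq0 : 0 < q)
    (hqh : q ≤ 1 / 2) (hqsq : q ^ 2 * (1 + τ ^ 2) = τ ^ 2) :
    Real.sqrt 2 * τ ≤ 2 * (q - q ^ 4) := by
  have hq2ub : q ^ 2 ≤ q / 2 := by nlinarith
  have hq4ub : q ^ 4 ≤ q / 8 := by
    nlinarith [mul_nonneg (sub_nonneg.mpr hq2ub) (by positivity : (0 : ℝ) ≤ q / 2 + q ^ 2)]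
  have h2 : Real.sqrt 2 * τ ≤ 7 / 4 * q := by
    apply le_of_sq_le' (by positivity) (by positivity)
    have hs2 : Real.sqrt 2 ^ 2 = 2 := Real.sq_sqrt (by norm_num)
    have hτ2 : τ ^ 2 ≤ 1 / 4 := by nlinarith
    have hq2lb : (4 : ℝ) / 5 * τ ^ 2 ≤ q ^ 2 := by
      nlinarith [mul_le_mul_of_nonneg_left hτ2 (sq_nonneg q)]
    rw [mul_pow, hs2]
    nlinarith
  linarith

private lemma up_numeric {τ q : ℝ} (hτ : 0 < τ) (hτ' : τ ≤ 1 / 2) (hq0 : 0 < q)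
    (hqτ : q ≤ τ) : (1 - q)⁻¹ - 1 ≤ 2 * τ := by
  have h1q : (0 : ℝ) < 1 - q := by linarith
  have hinv : (1 - q)⁻¹ ≤ 1 + 2 * q := by
    rw [inv_eq_one_div, div_le_iff₀ h1q]
    nlinarith
  linarith

set_option maxHeartbeats 1000000 in
/-- **The minimal diagonal entry of the block-diagonalized Gaussian RBF collocation matrix
is of exact order `τ`.** With `L = log(1 + τ⁻²)` and `β = π/√(2L)` (so that `β = εh` for the
paper's stable choice of shape parameter), the alternating Gaussian sum
`∑'_{n ∈ ℤ} (-1)ⁿ exp(-β²n²)`, which equals the diagonal entry `d₁(N/2)`, satisfies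
`√2 √(2L/π) τ ≤ ∑'_{n ∈ ℤ} (-1)ⁿ exp(-β²n²) ≤ 4 √(2L/π) τ`;
hence the maximal entry of the pseudo-inverse `Z*` is of order `τ⁻¹`. -/
theorem alternating_gaussian_sum_order_tau (τ : ℝ) (hτ : 0 < τ) (hτ' : τ ≤ 1 / 2)
    (L β : ℝ) (hL : L = Real.log (1 + τ⁻¹ ^ 2)) (hβ : β = Real.pi / Real.sqrt (2 * L)) :
    Real.sqrt 2 * Real.sqrt (2 * L / Real.pi) * τ ≤
        (∑' n : ℤ, (-1 : ℝ) ^ n * Real.exp (-β ^ 2 * (n : ℝ) ^ 2)) ∧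
      (∑' n : ℤ, (-1 : ℝ) ^ n * Real.exp (-β ^ 2 * (n : ℝ) ^ 2)) ≤
        4 * Real.sqrt (2 * L / Real.pi) * τ := by
  have hπ := Real.pi_pos
  have hτne : τ ≠ 0 := ne_of_gt hτ
  have hτ2 : (0 : ℝ) < τ⁻¹ ^ 2 := by positivity
  have hL0 : 0 < L := by rw [hL]; exact Real.log_pos (by linarith)
  have hβ0 : 0 < β := by rw [hβ]; positivity
  have hβ2 : β ^ 2 = Real.pi ^ 2 / (2 * L) := by
    rw [hβ, div_pow, Real.sq_sqrt (by linarith)]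
  have hβ2pos : 0 < β ^ 2 := by positivity
  -- q facts
  set q : ℝ := Real.exp (-(L / 2)) with hq_def
  have hq0 : 0 < q := Real.exp_pos _
  have hqL : q ^ 2 = Real.exp (-L) := by
    rw [hq_def, ← Real.exp_nat_mul]; congr 1; push_cast; ring
  have hq4 : q ^ 4 = Real.exp (-(2 * L)) := by
    rw [hq_def, ← Real.exp_nat_mul]; congr 1; push_cast; ring
  have hexpL : Real.exp (-L) = (1 + τ⁻¹ ^ 2)⁻¹ := by
    rw [Real.exp_neg, hL, Real.exp_log (by linarith)]
  have hqsq : q ^ 2 * (1 + τ ^ 2) = τ ^ 2 := by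
    rw [hqL, hexpL]
    field_simp
    ring
  have hqτ : q ≤ τ := q_le_tau hτ hq0 hqsq
  have hqh : q ≤ 1 / 2 := le_trans hqτ hτ'
  -- sums over ℕ
  set A : ℝ := ∑' n : ℕ, Real.exp (-(L / 2) * (n : ℝ) ^ 2) with hA_def
  set B : ℝ := ∑' n : ℕ, Real.exp (-(2 * L) * (n : ℝ) ^ 2) with hB_def
  have hL2 : (0 : ℝ) < L / 2 := by linarith
  have h2L : (0 : ℝ) < 2 * L := by linarith
  have hsumA := summable_gauss_nat' hL2
  have hsumB := summable_gauss_nat' h2L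
  -- upper bound on A
  have hA_ub : A ≤ (1 - q)⁻¹ := by
    rw [hA_def, ← tsum_geometric_of_lt_one hq0.le (by linarith : q < 1)]
    exact Summable.tsum_le_tsum (fun n => gauss_le_pow' hL2 n) hsumA
      (summable_geometric_of_lt_one hq0.le (by linarith))
  -- lower bound on B
  have hB_lb : 1 ≤ B := by
    calc (1 : ℝ) = Real.exp (-(2 * L) * ((0 : ℕ) : ℝ) ^ 2) := by norm_num
      _ ≤ B := Summable.le_tsum hsumB 0 (fun j _ => (Real.exp_pos _).le)
  -- lower bound on A - B
  have hAB_lb : q - q ^ 4 ≤ A - B := by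
    have hsub : A - B = ∑' n : ℕ,
        (Real.exp (-(L / 2) * (n : ℝ) ^ 2) - Real.exp (-(2 * L) * (n : ℝ) ^ 2)) := by
      rw [hA_def, hB_def, Summable.tsum_sub hsumA hsumB]
    rw [hsub]
    have := Summable.le_tsum (hsumA.sub hsumB) 1 (fun j _ => by
      have : -(2 * L) * (j : ℝ) ^ 2 ≤ -(L / 2) * (j : ℝ) ^ 2 := by nlinarith [sq_nonneg (j : ℝ)]
      simpa using Real.exp_le_exp.mpr this)
    refine le_trans (le_of_eq ?_) this
    rw [hq_def, hq4]
    norm_num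
  -- the alternating sum identity
  set E : ℤ → ℝ := fun n => Real.exp (-β ^ 2 * (n : ℝ) ^ 2) with hE_def
  set F : ℤ → ℝ := fun n => if Even n then Real.exp (-β ^ 2 * (n : ℝ) ^ 2) else 0 with hF_def
  have hE_sum : Summable E := summable_gauss_int' hβ2pos
  have hF_sum : Summable F := by
    apply Summable.of_nonneg_of_le (fun n => ?_) (fun n => ?_) hE_sum
    · rw [hF_def]; dsimp only; split <;> positivity
    · rw [hF_def, hE_def]; dsimp only; split
      · exact le_refl _
      · positivity
  have hF_tsum : ∑' n : ℤ, F n = ∑' m : ℤ, Real.exp (-(4 * β ^ 2) * (m : ℝ) ^ 2) := by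
    have hinj : Function.Injective (fun m : ℤ => 2 * m) :=
      mul_right_injective₀ two_ne_zero
    have hsupp : Function.support F ⊆ Set.range (fun m : ℤ => 2 * m) := by
      intro n hn
      rw [hF_def] at hn
      simp only [Function.mem_support] at hn
      by_cases h : Even n
      · obtain ⟨k, hk⟩ := h
        exact ⟨k, by dsimp only; omega⟩
      · simp [h] at hn
    have := Function.Injective.tsum_eq hinj hsupp
    rw [← this]
    apply tsum_congr
    intro m
    have hev : Even (2 * m) := ⟨m, two_mul m⟩
    rw [hF_def]
    simp only [hev, if_true]
    congr 1
    push_cast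
    ring
  have hpoint : ∀ n : ℤ, (-1 : ℝ) ^ n * Real.exp (-β ^ 2 * (n : ℝ) ^ 2)
      = 2 * F n - E n := by
    intro n
    by_cases h : Even n
    · rw [hF_def, hE_def]
      simp only [h, if_true, Even.neg_one_zpow h]
      ring
    · rw [hF_def, hE_def]
      simp only [h, if_false, Odd.neg_one_zpow (Int.not_even_iff_odd.mp h)]
      ring
  have hS : (∑' n : ℤ, (-1 : ℝ) ^ n * Real.exp (-β ^ 2 * (n : ℝ) ^ 2))
      = 2 * (∑' n : ℤ, F n) - ∑' n : ℤ, E n := by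
    rw [tsum_congr hpoint, Summable.tsum_sub (hF_sum.mul_left 2) hE_sum, tsum_mul_left]
  -- Poisson
  have h4β2 : (0 : ℝ) < 4 * β ^ 2 := by positivity
  have hfreq1 : Real.pi ^ 2 / β ^ 2 = 2 * L := by
    rw [hβ2]; field_simp
  have hfreq2 : Real.pi ^ 2 / (4 * β ^ 2) = L / 2 := by
    rw [hβ2]; field_simp; ring
  have hP1 : ∑' n : ℤ, E n = (Real.sqrt (β ^ 2 / Real.pi))⁻¹
      * ∑' n : ℤ, Real.exp (-(2 * L) * (n : ℝ) ^ 2) := by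
    rw [hE_def]
    rw [poisson' hβ2pos, hfreq1]
  have hsqrt4 : Real.sqrt (4 * β ^ 2 / Real.pi) = 2 * Real.sqrt (β ^ 2 / Real.pi) := by
    rw [show (4 : ℝ) * β ^ 2 / Real.pi = 4 * (β ^ 2 / Real.pi) by ring,
      Real.sqrt_mul (by norm_num : (0 : ℝ) ≤ 4),
      show (4 : ℝ) = 2 ^ 2 by norm_num, Real.sqrt_sq (by norm_num : (0 : ℝ) ≤ 2)]
  have hP2 : ∑' n : ℤ, F n = (2 * Real.sqrt (β ^ 2 / Real.pi))⁻¹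
      * ∑' n : ℤ, Real.exp (-(L / 2) * (n : ℝ) ^ 2) := by
    rw [hF_tsum, poisson' h4β2, hfreq2, hsqrt4]
  -- coefficient
  set s : ℝ := Real.sqrt (β ^ 2 / Real.pi) with hs_def
  have hs0 : 0 < s := Real.sqrt_pos.mpr (by positivity)
  have hs_eq : s⁻¹ = Real.sqrt (2 * L / Real.pi) := by
    rw [hs_def, hβ2, ← Real.sqrt_inv]
    congr 1
    field_simp
  -- combine ℤ-sums into ℕ-sums
  have hZ1 : ∑' n : ℤ, Real.exp (-(L / 2) * (n : ℝ) ^ 2) = 2 * A - 1 := tsum_gauss_int' hL2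
  have hZ2 : ∑' n : ℤ, Real.exp (-(2 * L) * (n : ℝ) ^ 2) = 2 * B - 1 := tsum_gauss_int' h2L
  have hS2 : (∑' n : ℤ, (-1 : ℝ) ^ n * Real.exp (-β ^ 2 * (n : ℝ) ^ 2))
      = s⁻¹ * (2 * (A - B)) := by
    rw [hS, hP1, hP2, hZ1, hZ2, mul_inv]
    ring
  rw [hS2, ← hs_eq]
  have hsi0 : 0 < s⁻¹ := by positivity
  constructor
  · -- lower bound
    have key : Real.sqrt 2 * τ ≤ 2 * (A - B) :=
      le_trans (low_numeric hτ hτ' hq0 hqh hqsq) (by linarith)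
    calc Real.sqrt 2 * s⁻¹ * τ = s⁻¹ * (Real.sqrt 2 * τ) := by ring
      _ ≤ s⁻¹ * (2 * (A - B)) := by
          exact mul_le_mul_of_nonneg_left key hsi0.le
  · -- upper bound
    have key : 2 * (A - B) ≤ 4 * τ := by
      have h2 := up_numeric hτ hτ' hq0 hqτ
      have h3 : A - B ≤ (1 - q)⁻¹ - 1 := by linarith
      linarith
    calc s⁻¹ * (2 * (A - B)) ≤ s⁻¹ * (4 * τ) := mul_le_mul_of_nonneg_left key hsi0.le
      _ = 4 * s⁻¹ * τ := by ring
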